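/- arXiv:1510.06212 — 4 statements merged into one kernel-verified Lean document; each statement's English description precedes it below -/
import Mathlib

section
/- Let Q be a finite set, let M ⊆ Q^d be an MDS code with code distance ρ, let C₁ = M ∩ (A₁ × ⋯ × A_d) be a subcode of M of order ℓ (so A₁,…,A_d ⊆ Q with |A₁| = ⋯ = |A_d| = ℓ, and C₁ is an MDS code in A₁ × ⋯ × A_d with code distance ρ), and let C₂ ⊆ A₁ × ⋯ × A_d be any MDS code in A₁ × ⋯ × A_d with code distance ρ. Then M' = (M \ C₁) ∪ C₂ is an MDS code in Q^d with code distance ρ. -/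
/-- `C ⊆ Q^ι` is an MDS code whose intersection with every `t`-dimensional
axis-aligned plane (obtained by fixing `|ι| - t` coordinates) is a single point. -/
def IsMDS {ι Q : Type*} [Fintype ι] (t : ℕ) (C : Set (ι → Q)) : Prop :=
  ∀ S : Finset ι, S.card = Fintype.card ι - t → ∀ a : ι → Q,
    ∃! x : ι → Q, x ∈ C ∧ ∀ i ∈ S, x i = a i

/-- `C` is an MDS code inside the product `A₁ × ⋯ × A_d`: it is contained in the
product and meets every `t`-dimensional axis-aligned plane of the product in
exactly one point. -/
def IsMDSIn {ι Q : Type*} [Fintype ι] (t : ℕ) (A : ι → Set Q) (C : Set (ι → Q)) : Prop :=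
  C ⊆ {x | ∀ i, x i ∈ A i} ∧
  ∀ S : Finset ι, S.card = Fintype.card ι - t → ∀ a : ι → Q, (∀ i, a i ∈ A i) →
    ∃! x : ι → Q, x ∈ C ∧ ∀ i ∈ S, x i = a i

/-- Switching: replacing a subcode `C₁` of an MDS code `M` by another MDS code
`C₂` on the same product `A₁ × ⋯ × A_d` yields an MDS code with the same
parameters. -/
theorem switching {Q : Type*} [Fintype Q] (d ρ ℓ : ℕ) (hρ1 : 1 ≤ ρ) (hρd : ρ ≤ d)
    (M : Set (Fin d → Q)) (hM : IsMDS (d - ρ + 1) M)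
    (A : Fin d → Set Q) (hA : ∀ i, (A i).ncard = ℓ)
    (C₁ : Set (Fin d → Q)) (hC₁ : C₁ = M ∩ {x | ∀ i, x i ∈ A i})
    (hC₁mds : IsMDSIn (d - ρ + 1) A C₁)
    (C₂ : Set (Fin d → Q)) (hC₂mds : IsMDSIn (d - ρ + 1) A C₂) :
    IsMDS (d - ρ + 1) ((M \ C₁) ∪ C₂) := by
  intro S hS a
  obtain ⟨x, ⟨hxM, hxa⟩, hxuniq⟩ := hM S hS a
  by_cases hx : x ∈ C₁
  · have hxA : ∀ i, x i ∈ A i := hC₁mds.1 hx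
    obtain ⟨y, ⟨hyC, hya⟩, hyuniq⟩ := hC₂mds.2 S hS x hxA
    refine ⟨y, ⟨Or.inr hyC, fun i hi => (hya i hi).trans (hxa i hi)⟩, ?_⟩
    rintro z ⟨hz | hzC, hza⟩
    · exact absurd (by rw [hxuniq z ⟨hz.1, hza⟩]; exact hx) hz.2
    · exact hyuniq z ⟨hzC, fun i hi => (hza i hi).trans (hxa i hi).symm⟩
  · refine ⟨x, ⟨Or.inl ⟨hxM, hx⟩, hxa⟩, ?_⟩
    rintro z ⟨hz | hzC, hza⟩
    · exact hxuniq z ⟨hz.1, hza⟩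
    · exfalso
      have hzA : ∀ i, z i ∈ A i := hC₂mds.1 hzC
      obtain ⟨w, ⟨hwC, hwz⟩, -⟩ := hC₁mds.2 S hS z hzA
      have hwM : w ∈ M := (hC₁ ▸ hwC).1
      have hwx : w = x := hxuniq w ⟨hwM, fun i hi => (hwz i hi).trans (hza i hi)⟩
      exact hx (hwx ▸ hwC)
end

section
/- Let Q be a finite field, F ⊆ Q a subfield, and let s ≥ 1, t ≥ 1, d = s + t. Let C = {(x₁,…,x_s, f₁(x),…,f_t(x)) : x ∈ Q^s} where each f_i(x) = α_{1i}x₁ + ⋯ + α_{si}x_s with all coefficients α_{ji} ∈ F, and suppose C is an MDS code with code distance t + 1 (an MDS(s, d, |Q|) code). Then for every codeword (a₁,…,a_d) ∈ C and every v ∈ Q \ {0}, the set C ∩ (L(a₁,v) × ⋯ × L(a_d,v)) is a subcode of C of order |F|, where L(a,v) = {a + αv : α ∈ F}. -/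
/-- The one-dimensional affine line `L(a, v) = {a + β v : β ∈ F}` over the
subfield `F`. -/
def affLine {Q : Type*} [Field Q] (F : Subfield Q) (a v : Q) : Set Q :=
  {b : Q | ∃ β ∈ F, b = a + β * v}

/-- If `C ⊆ Q^{s+t}` is an MDS code with code distance `t + 1` that is linear
over a subfield `F`, then for every codeword `a ∈ C` and every `v ≠ 0`, the set
`C ∩ (L(a₁,v) × ⋯ × L(a_d,v))` is a subcode of `C` of order `|F|`. -/
theorem linear_mds_subcode {Q : Type*} [Field Q] [Fintype Q] (F : Subfield Q)
    (s t : ℕ) (hs : 1 ≤ s) (ht : 1 ≤ t)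
    (α : Fin s → Fin t → Q) (hα : ∀ j i, α j i ∈ F)
    (C : Set (Fin s ⊕ Fin t → Q))
    (hCdef : C = {y | ∀ i : Fin t, y (Sum.inr i) = ∑ j : Fin s, α j i * y (Sum.inl j)})
    (hC : IsMDS s C)
    (a : Fin s ⊕ Fin t → Q) (ha : a ∈ C) (v : Q) (hv : v ≠ 0) :
    (∀ i, (affLine F (a i) v).ncard = Nat.card F) ∧
    IsMDSIn s (fun i => affLine F (a i) v)
      (C ∩ {x | ∀ i, x i ∈ affLine F (a i) v}) := by
  classical
  have hline : ∀ b : Q, affLine F b v = (fun β : Q => b + β * v) '' (F : Set Q) := by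
    intro b
    ext y
    simp only [affLine, Set.mem_setOf_eq, Set.mem_image, SetLike.mem_coe, eq_comm]
  have hcard : ∀ i, (affLine F (a i) v).ncard = Nat.card F := by
    intro i
    rw [hline, Set.ncard_image_of_injective _ ?_, ← Nat.card_coe_set_eq]
    · rfl
    · intro b c h
      exact mul_right_cancel₀ hv (add_left_cancel h)
  -- s = t
  have hcardQ : (1 : ℕ) < Fintype.card Q := Fintype.one_lt_card
  have hst : s = t := by
    set ψ : (Fin s → Q) → (Fin t → Q) := fun x i => ∑ j, α j i * x j with hψ
    have hg : ∀ x : Fin s → Q, Sum.elim x (ψ x) ∈ C := by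
      intro x
      rw [hCdef]
      intro i
      simp [ψ]
    have hS : (Finset.univ.image (Sum.inr : Fin t → Fin s ⊕ Fin t)).card
        = Fintype.card (Fin s ⊕ Fin t) - s := by
      rw [Finset.card_image_of_injective _ Sum.inr_injective]
      simp
    have hbij : Function.Bijective ψ := by
      constructor
      · intro x x' hxx
        obtain ⟨z, hz, huniq⟩ := hC _ hS (Sum.elim x (ψ x))
        have h1 : Sum.elim x (ψ x) = z := huniq _ ⟨hg x, fun i _ => rfl⟩
        have h2 : Sum.elim x' (ψ x') = z := by
          refine huniq _ ⟨hg x', ?_⟩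
          intro i hi
          simp only [Finset.mem_image, Finset.mem_univ, true_and] at hi
          obtain ⟨k, rfl⟩ := hi
          simp [hxx]
        funext j
        have := congrFun (h1.trans h2.symm) (Sum.inl j)
        simpa using this
      · intro b
        obtain ⟨z, ⟨hzC, hzS⟩, _⟩ := hC _ hS (Sum.elim 0 b)
        refine ⟨fun j => z (Sum.inl j), ?_⟩
        funext i
        have h1 : z (Sum.inr i) = ∑ j, α j i * z (Sum.inl j) := by
          rw [hCdef] at hzC
          exact hzC i
        have h2 : z (Sum.inr i) = b i := by
          have := hzS (Sum.inr i) (by simp)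
          simpa using this
        simp [ψ, ← h1, h2]
    have hcc := Fintype.card_congr (Equiv.ofBijective ψ hbij)
    simp only [Fintype.card_fun, Fintype.card_fin] at hcc
    exact Nat.pow_right_injective hcardQ hcc
  haveI : Fintype ↥F := Fintype.ofFinite _
  set α' : Fin s → Fin t → F := fun j i => ⟨α j i, hα j i⟩ with hα'
  set g : (Fin s → F) → (Fin s ⊕ Fin t → F) :=
    fun x => Sum.elim x (fun i => ∑ j, α' j i * x j) with hgdef
  have hgC : ∀ x, (fun i => ((g x i : Q))) ∈ C := by
    intro x
    rw [hCdef]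
    intro i
    simp only [g, Sum.elim_inr, Sum.elim_inl, Set.mem_setOf_eq]
    push_cast
    rfl
  refine ⟨hcard, Set.inter_subset_right, ?_⟩
  intro S hS a' ha'
  set ρ : (Fin s → F) → (↥S → F) := fun x i => g x i.1 with hρ
  have hρinj : Function.Injective ρ := by
    intro x x' h
    obtain ⟨z, hz, huniq⟩ := hC S hS (fun i => ((g x i : Q)))
    have h1 := huniq _ ⟨hgC x, fun i _ => rfl⟩
    have h2 : (fun i => ((g x' i : Q))) = z := by
      refine huniq _ ⟨hgC x', ?_⟩
      intro i hi
      have hh : ρ x' ⟨i, hi⟩ = ρ x ⟨i, hi⟩ := by rw [h]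
      simp only [ρ] at hh
      exact congrArg Subtype.val hh
    have h3 : (fun i => ((g x i : Q))) = fun i => ((g x' i : Q)) := h1.trans h2.symm
    funext j
    have := congrFun h3 (Sum.inl j)
    simp only [g, Sum.elim_inl] at this
    exact Subtype.ext this
  have hρsurj : Function.Surjective ρ := by
    have c1 : Fintype.card (Fin s → F) = Fintype.card (↥S → F) := by
      simp only [Fintype.card_fun, Fintype.card_fin, Fintype.card_coe]
      congr 1
      rw [hS]
      simp [hst]
    exact ((Fintype.bijective_iff_injective_and_card ρ).mpr ⟨hρinj, c1⟩).surjective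
  simp only [affLine, Set.mem_setOf_eq] at ha'
  choose β hβF hβ using ha'
  obtain ⟨x₀, hx₀⟩ := hρsurj (fun i => ⟨β i.1, hβF i.1⟩)
  set z : Fin s ⊕ Fin t → Q := fun i => a i + (g x₀ i : Q) * v with hzdef
  have hzC : z ∈ C := by
    rw [hCdef]
    intro i
    have haC := ha
    rw [hCdef] at haC
    have h1 := haC i
    have h2 : ((g x₀ (Sum.inr i) : F) : Q) = ∑ j, α j i * ((g x₀ (Sum.inl j) : F) : Q) := by
      simp only [g, Sum.elim_inr, Sum.elim_inl]
      push_cast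
      rfl
    simp only [z, Set.mem_setOf_eq, h1, h2, Finset.sum_mul, ← Finset.sum_add_distrib]
    exact Finset.sum_congr rfl fun j _ => by ring
  have hzS : ∀ i ∈ S, z i = a' i := by
    intro i hi
    have := congrFun hx₀ ⟨i, hi⟩
    simp only [ρ] at this
    have hco : ((g x₀ i : F) : Q) = β i := congrArg Subtype.val this
    simp only [z, hco]
    exact (hβ i).symm
  have hzP : ∀ i, z i ∈ affLine F (a i) v := by
    intro i
    exact ⟨(g x₀ i : Q), (g x₀ i).2, rfl⟩
  refine ⟨z, ⟨⟨hzC, hzP⟩, hzS⟩, ?_⟩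
  rintro y ⟨⟨hyC, _⟩, hyS⟩
  obtain ⟨w, hw, huniq⟩ := hC S hS a'
  rw [huniq y ⟨hyC, hyS⟩, huniq z ⟨hzC, hzS⟩]
end

section
/- For all integers q, ℓ, d₀ with d₀ ≥ 2 and 1 ≤ ℓ ≤ q/2, there exists a latin d₀-cube f of order q on a q-element set Q containing a latin d₀-subcube of order ℓ: there exist ℓ-element subsets A₁,…,A_{d₀}, B ⊆ Q such that f(x) ∈ B for all x ∈ A₁ × ⋯ × A_{d₀}, and fixing any d₀ − 1 of the arguments in their respective sets A_i yields a bijection from the remaining set A_j onto B. -/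
/-- `f` is a latin `d`-cube of order `q`: fixing any `d - 1` of the arguments
yields a bijection of `Fin q` in the remaining argument. -/
def IsLatinCube (d q : ℕ) (f : (Fin d → Fin q) → Fin q) : Prop :=
  ∀ (i : Fin d) (x : Fin d → Fin q),
    Function.Bijective fun a : Fin q => f (Function.update x i a)

namespace LatinAux

/-- helper: equality of casts in `ZMod m` for small naturals -/
lemma cast_eq_cases {m a b : ℕ} (hm : 0 < m) (ha : a < 2*m) (hb : b < 2*m)
    (h : (a : ZMod m) = (b : ZMod m)) : a = b ∨ a + m = b ∨ b + m = a := by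
  haveI : NeZero m := ⟨hm.ne'⟩
  have h' : a % m = b % m := (ZMod.natCast_eq_natCast_iff _ _ _).mp h
  rcases lt_or_ge a m with h1 | h1 <;> rcases lt_or_ge b m with h2 | h2
  · left; rwa [Nat.mod_eq_of_lt h1, Nat.mod_eq_of_lt h2] at h'
  · right; left
    have : b % m = b - m := by
      rw [Nat.mod_eq_sub_mod h2, Nat.mod_eq_of_lt (by omega)]
    rw [Nat.mod_eq_of_lt h1, this] at h'; omega
  · right; right
    have : a % m = a - m := by
      rw [Nat.mod_eq_sub_mod h1, Nat.mod_eq_of_lt (by omega)]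
    rw [Nat.mod_eq_of_lt h2, this] at h'; omega
  · left
    have ha' : a % m = a - m := by
      rw [Nat.mod_eq_sub_mod h1, Nat.mod_eq_of_lt (by omega)]
    have hb' : b % m = b - m := by
      rw [Nat.mod_eq_sub_mod h2, Nat.mod_eq_of_lt (by omega)]
    omega

variable (m k : ℕ) [NeZero m]

/-- the near-orthomorphism: `2t`, or `2t+1` when `m` even and `2t ≥ m`. -/
def sig (t : ZMod m) : ZMod m :=
  if Even m ∧ m ≤ 2 * t.val then ((2 * t.val + 1 : ℕ) : ZMod m) else ((2 * t.val : ℕ) : ZMod m)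

def dlt (t : ZMod m) : ZMod m := sig m t - t

def T1 : Finset (ZMod m) := Finset.univ.filter (fun t => t.val < m - k)

lemma mem_T1 {t : ZMod m} : t ∈ T1 m k ↔ t.val < m - k := by simp [T1]

lemma card_T1 : (T1 m k).card = m - k := by
  classical
  have h : T1 m k = Finset.image (Nat.cast : ℕ → ZMod m) (Finset.range (m - k)) := by
    ext t
    simp only [mem_T1, Finset.mem_image, Finset.mem_range]
    constructor
    · intro ht; exact ⟨t.val, ht, ZMod.natCast_rightInverse t⟩
    · rintro ⟨n, hn, rfl⟩; rwa [ZMod.val_cast_of_lt (by omega)]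
  rw [h, Finset.card_image_of_injOn, Finset.card_range]
  intro a ha b hb hab
  simp only [Finset.coe_range, Set.mem_Iio] at ha hb
  have := congrArg ZMod.val hab
  rwa [ZMod.val_cast_of_lt (by omega), ZMod.val_cast_of_lt (by omega)] at this

variable {m}

lemma dlt_eq (t : ZMod m) :
    dlt m t = if Even m ∧ m ≤ 2 * t.val then t + 1 else t := by
  have hv : ((t.val : ℕ) : ZMod m) = t := ZMod.natCast_rightInverse t
  rw [dlt, sig]
  split_ifs with h
  · push_cast [Nat.cast_add, Nat.cast_mul]
    rw [hv]; ring
  · push_cast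
    rw [hv]; ring

lemma sig_injOn {k : ℕ} (hk : 1 ≤ k) (hkm : k ≤ m) {t t' : ZMod m}
    (ht : t.val < m - k) (ht' : t'.val < m - k) (h : sig m t = sig m t') : t = t' := by
  have hm : 0 < m := Nat.pos_of_ne_zero (NeZero.ne m)
  have hvt := ZMod.val_lt t; have hvt' := ZMod.val_lt t'
  apply ZMod.val_injective
  rw [sig, sig] at h
  split_ifs at h with h1 h2 h2
  · obtain ⟨m2, hm2⟩ := h1.1
    rcases cast_eq_cases hm (by omega) (by omega) h with h3 | h3 | h3 <;> omega
  · obtain ⟨m2, hm2⟩ := h1.1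
    have h2' : 2 * t'.val < m := by by_contra hh; exact h2 ⟨h1.1, by omega⟩
    rcases cast_eq_cases hm (by omega) (by omega) h with h3 | h3 | h3 <;> omega
  · obtain ⟨m2, hm2⟩ := h2.1
    have h1' : 2 * t.val < m := by by_contra hh; exact h1 ⟨h2.1, by omega⟩
    rcases cast_eq_cases hm (by omega) (by omega) h with h3 | h3 | h3 <;> omega
  · by_cases he : Even m
    · have h1' : 2 * t.val < m := by by_contra hh; exact h1 ⟨he, by omega⟩
      have h2' : 2 * t'.val < m := by by_contra hh; exact h2 ⟨he, by omega⟩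
      obtain ⟨m2, hm2⟩ := he
      rcases cast_eq_cases hm (by omega) (by omega) h with h3 | h3 | h3 <;> omega
    · have ho : m % 2 = 1 := Nat.odd_iff.mp (Nat.not_even_iff_odd.mp he)
      rcases cast_eq_cases hm (by omega) (by omega) h with h3 | h3 | h3 <;> omega

lemma dlt_injOn {k : ℕ} (hk : 1 ≤ k) (hkm : k ≤ m) {t t' : ZMod m}
    (ht : t.val < m - k) (ht' : t'.val < m - k) (h : dlt m t = dlt m t') : t = t' := by
  have hm : 0 < m := Nat.pos_of_ne_zero (NeZero.ne m)
  have hvt := ZMod.val_lt t; have hvt' := ZMod.val_lt t'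
  have hv : ((t.val : ℕ) : ZMod m) = t := ZMod.natCast_rightInverse t
  have hv' : ((t'.val : ℕ) : ZMod m) = t' := ZMod.natCast_rightInverse t'
  rw [dlt_eq, dlt_eq] at h
  apply ZMod.val_injective
  split_ifs at h with h1 h2 h2
  · have := add_right_cancel h; exact congrArg ZMod.val this ▸ rfl
  · have h2' : 2 * t'.val < m := by by_contra hh; exact h2 ⟨h1.1, by omega⟩
    have h1' : m ≤ 2 * t.val := h1.2
    have : ((t.val + 1 : ℕ) : ZMod m) = ((t'.val : ℕ) : ZMod m) := by
      push_cast; rw [hv, hv']; exact h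
    rcases cast_eq_cases hm (by omega) (by omega) this with h3 | h3 | h3 <;> omega
  · have h1' : 2 * t.val < m := by by_contra hh; exact h1 ⟨h2.1, by omega⟩
    have h2' : m ≤ 2 * t'.val := h2.2
    have : ((t.val : ℕ) : ZMod m) = ((t'.val + 1 : ℕ) : ZMod m) := by
      push_cast; rw [hv, hv']; exact h
    rcases cast_eq_cases hm (by omega) (by omega) this with h3 | h3 | h3 <;> omega
  · exact congrArg ZMod.val h ▸ rfl

variable (m)

def toC (z : ZMod m) : Fin (m + k) := ⟨z.val, lt_of_lt_of_le z.val_lt (Nat.le_add_right m k)⟩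

def toK (hk : 0 < k) (n : ℕ) : Fin (m + k) :=
  ⟨m + n % k, by have := Nat.mod_lt n hk; omega⟩

def gdef (hk : 0 < k) (eA eB : Fin k → ZMod m) (x y : Fin (m + k)) : Fin (m + k) :=
  if hx : x.val < m then
    if hy : y.val < m then
      if m - k ≤ (((y.val : ZMod m) - (x.val : ZMod m)).val) then
        toK m k hk ((((y.val : ZMod m) - (x.val : ZMod m)).val) - (m - k))
      else toC m k ((x.val : ZMod m) + sig m ((y.val : ZMod m) - (x.val : ZMod m)))
    else toC m k ((x.val : ZMod m) + eB ⟨y.val - m, by omega⟩)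
  else
    if hy : y.val < m then toC m k ((y.val : ZMod m) + eA ⟨x.val - m, by omega⟩)
    else toK m k hk ((x.val - m) + (y.val - m))

variable {m k}

lemma toC_val (z : ZMod m) : (toC m k z).val = z.val := rfl

omit [NeZero m] in
lemma toK_val (hk : 0 < k) (n : ℕ) : (toK m k hk n).val = m + n % k := rfl

lemma toC_inj {z z' : ZMod m} (h : toC m k z = toC m k z') : z = z' :=
  ZMod.val_injective m (by simpa [toC] using congrArg Fin.val h)

omit [NeZero m] in
lemma toK_inj {hk : 0 < k} {n n' : ℕ} (h : toK m k hk n = toK m k hk n') : n % k = n' % k := by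
  have := congrArg Fin.val h; simp only [toK_val] at this; omega

lemma toC_ne_toK {z : ZMod m} {hk : 0 < k} {n : ℕ} : toC m k z ≠ toK m k hk n := by
  intro h
  have := congrArg Fin.val h
  simp only [toC_val, toK_val] at this
  have := z.val_lt
  omega

lemma gdef_closed (hk : 0 < k) (eA eB : Fin k → ZMod m) (x y : Fin (m + k))
    (hx : m ≤ x.val) (hy : m ≤ y.val) : m ≤ (gdef m k hk eA eB x y).val := by
  rw [gdef, dif_neg (by omega), dif_neg (by omega), toK_val]
  omega

lemma fin_eq_of_cast {y y' : Fin (m + k)} (hy : y.val < m) (hy' : y'.val < m)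
    (h : ((y.val : ℕ) : ZMod m) = ((y'.val : ℕ) : ZMod m)) : y = y' :=
  Fin.ext (by rw [← ZMod.val_cast_of_lt hy, ← ZMod.val_cast_of_lt hy', h])

lemma key_col (xc yc : ZMod m) : xc + sig m (yc - xc) = yc + dlt m (yc - xc) := by
  rw [dlt]; ring

lemma g_row_inj (hk : 0 < k) (hkm : k ≤ m) (eA eB : Fin k → ZMod m)
    (heB : ∀ j, eB j ∉ (T1 m k).image (sig m)) (heBinj : Function.Injective eB)
    (x : Fin (m + k)) : Function.Injective (gdef m k hk eA eB x) := by
  intro y y' heq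
  unfold gdef at heq
  split_ifs at heq with h1 h2 h3 h4 h5 h6 h7 h8 h9 h10 h11 h12 h13
  -- case: x C, y S, y' S
  · have h := toK_inj heq
    have hvt := ZMod.val_lt ((y.val : ZMod m) - (x.val : ZMod m))
    have hvt' := ZMod.val_lt ((y'.val : ZMod m) - (x.val : ZMod m))
    rw [Nat.mod_eq_of_lt (by omega), Nat.mod_eq_of_lt (by omega)] at h
    have ht : ((y.val : ZMod m) - (x.val : ZMod m)) = ((y'.val : ZMod m) - (x.val : ZMod m)) := by
      apply ZMod.val_injective; omega
    exact fin_eq_of_cast h2 h4 (sub_left_inj.mp ht)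
  -- case: x C, y S, y' nonS
  · exact absurd heq.symm toC_ne_toK
  -- case: x C, y S, y' K
  · exact absurd heq.symm toC_ne_toK
  -- case: x C, y nonS, y' S
  · exact absurd heq toC_ne_toK
  -- case: x C, y nonS, y' nonS
  · have h := add_left_cancel (toC_inj heq)
    have ht := sig_injOn hk hkm (by omega) (by omega) h
    exact fin_eq_of_cast h2 h6 (sub_left_inj.mp ht)
  -- case: x C, y nonS, y' K
  · have h := add_left_cancel (toC_inj heq)
    refine absurd ?_ (heB ⟨y'.val - m, by omega⟩)
    rw [← h]
    exact Finset.mem_image_of_mem _ ((mem_T1 m k).mpr (by omega))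
  -- case: x C, y K, y' S
  · exact absurd heq toC_ne_toK
  -- case: x C, y K, y' nonS
  · have h := add_left_cancel (toC_inj heq)
    refine absurd ?_ (heB ⟨y.val - m, by omega⟩)
    rw [h]
    exact Finset.mem_image_of_mem _ ((mem_T1 m k).mpr (by omega))
  -- case: x C, y K, y' K
  · have h := heBinj (add_left_cancel (toC_inj heq))
    have := congrArg Fin.val h
    simp only at this
    exact Fin.ext (by omega)
  -- case: x K, y C, y' C
  · have h := add_right_cancel (toC_inj heq)
    exact fin_eq_of_cast (by omega) (by omega) h
  -- case: x K, y C, y' K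
  · exact absurd heq toC_ne_toK
  -- case: x K, y K, y' C
  · exact absurd heq.symm toC_ne_toK
  -- case: x K, y K, y' K
  · have h := toK_inj heq
    have h' := Nat.ModEq.add_left_cancel' (x.val - m) h
    rw [Nat.ModEq, Nat.mod_eq_of_lt (by omega), Nat.mod_eq_of_lt (by omega)] at h'
    exact Fin.ext (by omega)

lemma g_col_inj (hk : 0 < k) (hkm : k ≤ m) (eA eB : Fin k → ZMod m)
    (heA : ∀ j, eA j ∉ (T1 m k).image (dlt m)) (heAinj : Function.Injective eA)
    (y : Fin (m + k)) : Function.Injective (fun x => gdef m k hk eA eB x y) := by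
  intro x x' heq
  simp only at heq
  unfold gdef at heq
  split_ifs at heq with h1 h2 h3 h4 h5 h6 h7 h8 h9 h10 h11 h12 h13
  -- case: x C y S, x' C y S
  · have h := toK_inj heq
    have hvt := ZMod.val_lt ((y.val : ZMod m) - (x.val : ZMod m))
    have hvt' := ZMod.val_lt ((y.val : ZMod m) - (x'.val : ZMod m))
    rw [Nat.mod_eq_of_lt (by omega), Nat.mod_eq_of_lt (by omega)] at h
    have ht : ((y.val : ZMod m) - (x.val : ZMod m)) = ((y.val : ZMod m) - (x'.val : ZMod m)) := by
      apply ZMod.val_injective; omega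
    exact fin_eq_of_cast h1 h4 (sub_right_inj.mp ht)
  -- case: x C y S, x' C y nonS
  · exact absurd heq.symm toC_ne_toK
  -- case: x C y S, x' K
  · exact absurd heq.symm toC_ne_toK
  -- case: x C y nonS, x' C y S
  · exact absurd heq toC_ne_toK
  -- case: x C y nonS, x' C y nonS
  · have h := toC_inj heq
    rw [key_col, key_col] at h
    have h' := add_left_cancel h
    have ht := dlt_injOn hk hkm (by omega) (by omega) h'
    exact fin_eq_of_cast h1 h6 (sub_right_inj.mp ht)
  -- case: x C y nonS, x' K
  · have h := toC_inj heq
    rw [key_col] at h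
    have h' := add_left_cancel h
    refine absurd ?_ (heA ⟨x'.val - m, by omega⟩)
    rw [← h']
    exact Finset.mem_image_of_mem _ ((mem_T1 m k).mpr (by omega))
  -- case: y K, x C, x' C
  · have h := add_right_cancel (toC_inj heq)
    exact fin_eq_of_cast h1 h8 h
  -- case: y K, x C, x' K
  · exact absurd heq toC_ne_toK
  -- case: x K, x' C y S
  · exact absurd heq toC_ne_toK
  -- case: x K, x' C y nonS
  · have h := (toC_inj heq).symm
    rw [key_col] at h
    have h' := add_left_cancel h
    refine absurd ?_ (heA ⟨x.val - m, by omega⟩)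
    rw [← h']
    exact Finset.mem_image_of_mem _ ((mem_T1 m k).mpr (by omega))
  -- case: x K, x' K, y C
  · have h := heAinj (add_left_cancel (toC_inj heq))
    have := congrArg Fin.val h
    simp only at this
    exact Fin.ext (by omega)
  -- case: y K, x K, x' C
  · exact absurd heq.symm toC_ne_toK
  -- case: y K, x K, x' K
  · have h := toK_inj heq
    have h' := Nat.ModEq.add_right_cancel' (y.val - m) h
    rw [Nat.ModEq, Nat.mod_eq_of_lt (by omega), Nat.mod_eq_of_lt (by omega)] at h'
    exact Fin.ext (by omega)

theorem exists_good_g (m k : ℕ) (hk0 : 0 < k) (hkm : k ≤ m) :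
    ∃ g : Fin (m + k) → Fin (m + k) → Fin (m + k),
      (∀ x, Function.Bijective (g x)) ∧
      (∀ y, Function.Bijective fun x => g x y) ∧
      (∀ x y, m ≤ x.val → m ≤ y.val → m ≤ (g x y).val) := by
  haveI : NeZero m := ⟨by omega⟩
  classical
  have cardB : ((T1 m k).image (sig m))ᶜ.card = k := by
    rw [Finset.card_compl, Finset.card_image_of_injOn, card_T1]
    · rw [Fintype.card_eq_nat_card, Nat.card_zmod]; omega
    · intro t ht t' ht' h
      exact sig_injOn hk0 hkm ((mem_T1 m k).mp ht) ((mem_T1 m k).mp ht') h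
  have cardA : ((T1 m k).image (dlt m))ᶜ.card = k := by
    rw [Finset.card_compl, Finset.card_image_of_injOn, card_T1]
    · rw [Fintype.card_eq_nat_card, Nat.card_zmod]; omega
    · intro t ht t' ht' h
      exact dlt_injOn hk0 hkm ((mem_T1 m k).mp ht) ((mem_T1 m k).mp ht') h
  set eB : Fin k → ZMod m :=
    fun j => ((((T1 m k).image (sig m))ᶜ.equivFinOfCardEq cardB).symm j : ZMod m) with heBdef
  set eA : Fin k → ZMod m :=
    fun j => ((((T1 m k).image (dlt m))ᶜ.equivFinOfCardEq cardA).symm j : ZMod m) with heAdef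
  have heB : ∀ j, eB j ∉ (T1 m k).image (sig m) := fun j =>
    Finset.mem_compl.mp ((((T1 m k).image (sig m))ᶜ.equivFinOfCardEq cardB).symm j).2
  have heA : ∀ j, eA j ∉ (T1 m k).image (dlt m) := fun j =>
    Finset.mem_compl.mp ((((T1 m k).image (dlt m))ᶜ.equivFinOfCardEq cardA).symm j).2
  have heBinj : Function.Injective eB :=
    Subtype.coe_injective.comp (Equiv.injective _)
  have heAinj : Function.Injective eA :=
    Subtype.coe_injective.comp (Equiv.injective _)
  refine ⟨gdef m k hk0 eA eB, ?_, ?_, gdef_closed hk0 eA eB⟩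
  · intro x
    exact Finite.injective_iff_bijective.mp (g_row_inj hk0 hkm eA eB heB heBinj x)
  · intro y
    exact Finite.injective_iff_bijective.mp (g_col_inj hk0 hkm eA eB heA heAinj y)

section Fold

variable {q : ℕ} (g : Fin q → Fin q → Fin q)

/-- iterated product `x 0 ∘ x 1 ∘ ⋯` -/
def F : (n : ℕ) → (Fin (n + 1) → Fin q) → Fin q
  | 0, x => x 0
  | (n + 1), x => g (F n (fun i => x i.castSucc)) (x (Fin.last (n + 1)))

lemma F_latin (h1 : ∀ c, Function.Bijective (g c))
    (h2 : ∀ c, Function.Bijective fun z => g z c) :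
    ∀ (n : ℕ) (i : Fin (n + 1)) (x : Fin (n + 1) → Fin q),
      Function.Bijective fun a => F g n (Function.update x i a) := by
  intro n
  induction n with
  | zero =>
    intro i x
    have hi : i = 0 := Fin.ext (by omega)
    subst hi
    have : (fun a => F g 0 (Function.update x 0 a)) = fun a => a := by
      funext a; simp [F]
    rw [this]; exact Function.bijective_id
  | succ n IH =>
    intro i x
    induction i using Fin.lastCases with
    | last =>
      have : (fun a => F g (n + 1) (Function.update x (Fin.last (n + 1)) a))
          = fun a => g (F g n (fun j => x j.castSucc)) a := by
        funext a
        show g _ _ = _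
        congr 1
        · congr 1
          funext j
          exact Function.update_of_ne (Fin.castSucc_lt_last j).ne _ _
        · exact Function.update_self _ _ _
      rw [this]; exact h1 _
    | cast j =>
      have : (fun a => F g (n + 1) (Function.update x j.castSucc a))
          = (fun z => g z (x (Fin.last (n + 1)))) ∘
            (fun a => F g n (Function.update (fun i => x i.castSucc) j a)) := by
        funext a
        show g _ _ = _
        simp only [Function.comp_apply]
        congr 1
        · congr 1
          funext i
          by_cases hij : i = j
          · subst hij; simp [Function.update_self]
          · rw [Function.update_of_ne hij, Function.update_of_ne (by
              simpa [Fin.castSucc_inj] using hij)]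
        · exact Function.update_of_ne (Fin.castSucc_lt_last j).ne' _ _
      rw [this]
      exact (h2 _).comp (IH j _)

lemma F_closed {m : ℕ} (hcl : ∀ x y, m ≤ x.val → m ≤ y.val → m ≤ (g x y).val) :
    ∀ (n : ℕ) (x : Fin (n + 1) → Fin q), (∀ i, m ≤ (x i).val) → m ≤ (F g n x).val := by
  intro n
  induction n with
  | zero => intro x hx; exact hx 0
  | succ n IH =>
    intro x hx
    exact hcl _ _ (IH _ (fun i => hx i.castSucc)) (hx (Fin.last (n + 1)))

end Fold

lemma card_high (m k : ℕ) :
    (Finset.univ.filter (fun v : Fin (m + k) => m ≤ v.val)).card = k := by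
  classical
  have h : Finset.univ.filter (fun v : Fin (m + k) => m ≤ v.val)
      = Finset.image (fun j : Fin k => (⟨m + j.val, by omega⟩ : Fin (m + k))) Finset.univ := by
    ext v
    simp only [Finset.mem_filter, Finset.mem_univ, true_and, Finset.mem_image]
    constructor
    · intro hv
      have hlt := v.isLt
      refine ⟨⟨v.val - m, by omega⟩, ?_⟩
      first
        | exact Fin.ext (by simp; omega)
        | exact ⟨Finset.mem_univ _, Fin.ext (by simp; omega)⟩
    · rintro ⟨j, -, rfl⟩; simp
  rw [h, Finset.card_image_of_injective _ (fun a b hab => Fin.ext (by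
      have := congrArg Fin.val hab; simpa using this)), Finset.card_univ, Fintype.card_fin]

end LatinAux

/-- For `d₀ ≥ 2` and `1 ≤ ℓ ≤ q/2` there exists a latin `d₀`-cube of order `q`
with a latin `d₀`-subcube of order `ℓ`. -/
theorem latin_cube_with_subcube (q ℓ d₀ : ℕ) (hd₀ : 2 ≤ d₀)
    (hℓ1 : 1 ≤ ℓ) (hℓ : 2 * ℓ ≤ q) :
    ∃ f : (Fin d₀ → Fin q) → Fin q, IsLatinCube d₀ q f ∧
      ∃ (A : Fin d₀ → Finset (Fin q)) (B : Finset (Fin q)),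
        (∀ i, (A i).card = ℓ) ∧ B.card = ℓ ∧
        (∀ x : Fin d₀ → Fin q, (∀ i, x i ∈ A i) → f x ∈ B) ∧
        ∀ (j : Fin d₀) (x : Fin d₀ → Fin q), (∀ i, i ≠ j → x i ∈ A i) →
          Set.BijOn (fun a => f (Function.update x j a)) ↑(A j) ↑B := by
  classical
  obtain ⟨n, rfl⟩ : ∃ n, d₀ = n + 1 := ⟨d₀ - 1, by omega⟩
  obtain ⟨m, rfl⟩ : ∃ m, q = m + ℓ := ⟨q - ℓ, by omega⟩
  have hkm : ℓ ≤ m := by omega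
  obtain ⟨g, hrow, hcol, hcl⟩ := LatinAux.exists_good_g m ℓ hℓ1 hkm
  refine ⟨LatinAux.F g n, fun i x => LatinAux.F_latin g hrow hcol n i x, ?_⟩
  set A : Finset (Fin (m + ℓ)) := Finset.univ.filter (fun v => m ≤ v.val) with hA
  have memA : ∀ v : Fin (m + ℓ), v ∈ A ↔ m ≤ v.val := by
    intro v; simp [hA]
  have cardA : A.card = ℓ := LatinAux.card_high m ℓ
  refine ⟨fun _ => A, A, fun _ => cardA, cardA, ?_, ?_⟩
  · intro x hx
    exact (memA _).mpr (LatinAux.F_closed g hcl n x (fun i => (memA _).mp (hx i)))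
  · intro j x hx
    have hbij := LatinAux.F_latin g hrow hcol n j x
    have hmaps : ∀ a ∈ A, LatinAux.F g n (Function.update x j a) ∈ A := by
      intro a ha
      refine (memA _).mpr (LatinAux.F_closed g hcl n _ (fun i => ?_))
      by_cases hij : i = j
      · subst hij; rw [Function.update_self]; exact (memA _).mp ha
      · rw [Function.update_of_ne hij]; exact (memA _).mp (hx i hij)
    have himg : A.image (fun a => LatinAux.F g n (Function.update x j a)) = A := by
      apply Finset.eq_of_subset_of_card_le
      · intro b hb
        obtain ⟨a, ha, rfl⟩ := Finset.mem_image.mp hb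
        exact hmaps a ha
      · rw [Finset.card_image_of_injective _ hbij.injective]
    refine ⟨fun a ha => hmaps a (Finset.mem_coe.mp ha), hbij.injective.injOn, ?_⟩
    intro b hb
    have hb' : b ∈ A := Finset.mem_coe.mp hb
    rw [← himg] at hb'
    obtain ⟨a, ha, heq⟩ := Finset.mem_image.mp hb'
    exact ⟨a, Finset.mem_coe.mpr ha, heq⟩
end

section
/- For every integer n ≥ 1, there exists an injective map from the set of all S(3,{4,6},n) designs on the fixed ground set {1,…,n} into the set of all S(3,{4,6},2n−2) designs on the fixed ground set {1,…,2n−2}. -/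
/-!
Write the point set of an `S(3,{4,6},n)` design as `Option β`, with `none` a distinguished point
`∞` and `β` the remaining `n - 1` points; the new point set is `β × Fin 2`, two copies of every
point of `β`. A block `b` with `k` points in `β` is replaced by a fixed gadget on their `2k` copies.
If `∞ ∈ b` (so `k = 3` or `5`) the gadget is an `S(3,{4,6},2k)` (a single 6-block, resp. an
`SQS(10)`); if `∞ ∉ b` (so `k = 4` or `6`) it covers exactly the triples meeting three different
fibres, and it contains the block `b × {0}`. A new triple lies over a unique old triple (its
projection, plus `∞` when two of its points share a fibre), so exactly one gadget block covers it.

The construction is injective: the blocks avoiding `∞` reappear as the new blocks inside copy `0`,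
and if `∞, x, y ∈ b` then a further point `z` lies in `b` iff the new block through `(x,0)`,
`(y,0)`, `(z,0)` leaves copy `0`.
-/

/-- `B` is an `S(3,{4,6},v)` design on the ground set `Fin v`: every block has
size `4` or `6` and every `3`-element subset lies in exactly one block. -/
def IsS346 (v : ℕ) (B : Finset (Finset (Fin v))) : Prop :=
  (∀ b ∈ B, b.card = 4 ∨ b.card = 6) ∧
  ∀ s : Finset (Fin v), s.card = 3 → ∃! b, b ∈ B ∧ s ⊆ b

open Finset Function

def finsetOfLists (L : List (List ℕ)) : Finset (Finset ℕ) := (L.map List.toFinset).toFinset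

/-- Points are coded as `2 * j + i` for copy `i` of the `j`-th point. -/
def codedGadget : ℕ → Finset (Finset ℕ)
  | 3 => finsetOfLists [[0, 1, 2, 3, 4, 5]]
  | 4 => finsetOfLists [[0, 2, 4, 6], [0, 2, 5, 7], [0, 3, 4, 7], [0, 3, 5, 6], [1, 2, 4, 7],
      [1, 2, 5, 6], [1, 3, 4, 6], [1, 3, 5, 7]]
  | 5 => finsetOfLists [[0, 1, 2, 6], [0, 1, 3, 4], [0, 1, 5, 8], [0, 1, 7, 9], [0, 2, 3, 7],
      [0, 2, 4, 5], [0, 2, 8, 9], [0, 3, 5, 9], [0, 3, 6, 8], [0, 4, 6, 9], [0, 4, 7, 8],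
      [0, 5, 6, 7], [1, 2, 3, 9], [1, 2, 4, 8], [1, 2, 5, 7], [1, 3, 5, 6], [1, 3, 7, 8],
      [1, 4, 5, 9], [1, 4, 6, 7], [1, 6, 8, 9], [2, 3, 4, 6], [2, 3, 5, 8], [2, 4, 7, 9],
      [2, 5, 6, 9], [2, 6, 7, 8], [3, 4, 5, 7], [3, 4, 8, 9], [3, 6, 7, 9], [4, 5, 6, 8],
      [5, 7, 8, 9]]
  | 6 => finsetOfLists [[0, 2, 4, 6, 8, 10], [0, 2, 5, 9], [0, 2, 7, 11], [0, 3, 4, 11],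
      [0, 3, 5, 6], [0, 3, 7, 8], [0, 3, 9, 10], [0, 4, 7, 9], [0, 5, 7, 10], [0, 5, 8, 11],
      [0, 6, 9, 11], [1, 2, 4, 7], [1, 2, 5, 10], [1, 2, 6, 9], [1, 2, 8, 11], [1, 3, 4, 8],
      [1, 3, 5, 7, 9, 11], [1, 3, 6, 10], [1, 4, 6, 11], [1, 4, 9, 10], [1, 5, 6, 8], [1, 7, 8, 10],
      [2, 4, 9, 11], [2, 5, 6, 11], [2, 5, 7, 8], [2, 7, 9, 10], [3, 4, 6, 9], [3, 4, 7, 10],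
      [3, 5, 8, 10], [3, 6, 8, 11], [4, 7, 8, 11], [5, 6, 9, 10]]
  | _ => ∅


theorem codedGadget_subset_range_and_card : ∀ k ∈ ({3, 4, 5, 6} : Finset ℕ), ∀ E ∈ codedGadget k,
    E ⊆ range (k * 2) ∧ (E.card = 4 ∨ E.card = 6) := by
  decide

set_option maxRecDepth 10000 in
theorem codedGadget_cover : ∀ k ∈ ({3, 4, 5, 6} : Finset ℕ), ∀ t ∈ (range (k * 2)).powersetCard 3,
    (k ∈ ({3, 5} : Finset ℕ) ∨ (t.image (· / 2)).card = 3) →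
      ((codedGadget k).filter (t ⊆ ·)).card = 1 := by
  decide

theorem codedGadget_injOn_div_two : ∀ k ∈ ({4, 6} : Finset ℕ), ∀ E ∈ codedGadget k,
    (E.image (· / 2)).card = E.card := by
  decide

theorem codedGadget_evens_mem : ∀ k ∈ ({4, 6} : Finset ℕ),
    (range (k * 2)).filter (· % 2 = 0) ∈ codedGadget k := by
  decide

theorem codedGadget_exists_odd : ∀ k ∈ ({3, 5} : Finset ℕ), ∀ E ∈ codedGadget k,
    ∃ q ∈ E, q % 2 = 1 := by
  decide

section Gadget

def pointCode (k : ℕ) : Fin k × Fin 2 ↪ ℕ := finProdFinEquiv.toEmbedding.trans Fin.valEmbedding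

@[simp] theorem pointCode_apply (k : ℕ) (p : Fin k × Fin 2) : pointCode k p = p.2 + 2 * p.1 := rfl

theorem pointCode_div_two (k : ℕ) (p : Fin k × Fin 2) : pointCode k p / 2 = p.1 := by
  simp; omega

theorem pointCode_mod_two (k : ℕ) (p : Fin k × Fin 2) : pointCode k p % 2 = p.2 := by
  simp; omega

theorem exists_map_pointCode {k : ℕ} {E : Finset ℕ} (hE : E ⊆ range (k * 2)) :
    ∃ F : Finset (Fin k × Fin 2), F.map (pointCode k) = E := by
  obtain ⟨F, -, hF⟩ := subset_map_iff.1 (hE.trans fun q hq =>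
    mem_map.2 ⟨finProdFinEquiv.symm ⟨q, mem_range.1 hq⟩, mem_univ _,
      congrArg Fin.val (finProdFinEquiv.apply_symm_apply _)⟩ : E ⊆ univ.map (pointCode k))
  exact ⟨F, hF.symm⟩

theorem card_image_div_two_map_pointCode (k : ℕ) (t : Finset (Fin k × Fin 2)) :
    ((t.map (pointCode k)).image (· / 2)).card = (t.image Prod.fst).card := by
  rw [map_eq_image, image_image, show (· / 2) ∘ pointCode k = Fin.val ∘ Prod.fst from
    funext (pointCode_div_two k), ← image_image, card_image_of_injective _ Fin.val_injective]

def gadget (k : ℕ) : Finset (Finset (Fin k × Fin 2)) :=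
  univ.filter fun F : Finset (Fin k × Fin 2) => F.map (pointCode k) ∈ codedGadget k

theorem mem_gadget {k : ℕ} {F : Finset (Fin k × Fin 2)} :
    F ∈ gadget k ↔ F.map (pointCode k) ∈ codedGadget k := by
  simp [gadget]

variable {k : ℕ} {F : Finset (Fin k × Fin 2)}

theorem card_of_mem_gadget (hk : k ∈ ({3, 4, 5, 6} : Finset ℕ)) (hF : F ∈ gadget k) :
    F.card = 4 ∨ F.card = 6 := by
  simpa using (codedGadget_subset_range_and_card k hk _ (mem_gadget.1 hF)).2

theorem existsUnique_gadget (hk : k ∈ ({3, 4, 5, 6} : Finset ℕ)) {t : Finset (Fin k × Fin 2)}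
    (ht : t.card = 3) (hcover : k ∈ ({3, 5} : Finset ℕ) ∨ (t.image Prod.fst).card = 3) :
    ∃! F, F ∈ gadget k ∧ t ⊆ F := by
  have h := codedGadget_cover k hk (t.map (pointCode k))
    (mem_powersetCard.2 ⟨fun q hq => by
      obtain ⟨p, -, rfl⟩ := mem_map.1 hq; simp; omega, by simpa using ht⟩)
    (by rwa [card_image_div_two_map_pointCode])
  obtain ⟨E, ⟨hE, htE⟩, hEu⟩ : ∃! E, E ∈ codedGadget k ∧ t.map (pointCode k) ⊆ E := by
    simpa only [card_eq_one_iff_existsUnique, mem_filter] using h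
  obtain ⟨F, rfl⟩ := exists_map_pointCode (codedGadget_subset_range_and_card k hk E hE).1
  refine ⟨F, ⟨mem_gadget.2 hE, map_subset_map.1 htE⟩, fun F' hF' => ?_⟩
  exact map_injective _ (hEu _ ⟨mem_gadget.1 hF'.1, map_subset_map.2 hF'.2⟩)

theorem injOn_fst_of_mem_gadget (hk : k ∈ ({4, 6} : Finset ℕ)) (hF : F ∈ gadget k) :
    Set.InjOn Prod.fst (F : Set (Fin k × Fin 2)) := by
  have h := codedGadget_injOn_div_two k hk _ (mem_gadget.1 hF)
  rwa [card_image_div_two_map_pointCode, card_map, card_image_iff] at h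

theorem univ_product_zero_mem_gadget (hk : k ∈ ({4, 6} : Finset ℕ)) :
    (univ ×ˢ {0} : Finset (Fin k × Fin 2)) ∈ gadget k := by
  have hE := codedGadget_evens_mem k hk
  obtain ⟨F, hF⟩ := exists_map_pointCode (filter_subset (· % 2 = 0) (range (k * 2)))
  convert mem_gadget.2 (hF ▸ hE)
  ext p
  rw [← mem_map' (pointCode k) (s := F), hF]
  simp only [mem_filter, mem_product, mem_univ, mem_singleton, true_and, mem_range,
    pointCode_apply, Fin.ext_iff, Fin.val_zero]
  have := p.1.isLt
  omega

theorem exists_snd_eq_one_of_mem_gadget (hk : k ∈ ({3, 5} : Finset ℕ)) (hF : F ∈ gadget k) :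
    ∃ p ∈ F, p.2 = 1 := by
  obtain ⟨q, hq, hq1⟩ := codedGadget_exists_odd k hk _ (mem_gadget.1 hF)
  obtain ⟨p, hp, rfl⟩ := mem_map.1 hq
  exact ⟨p, hp, Fin.ext (by rw [← pointCode_mod_two, hq1]; rfl)⟩

end Gadget

section Design

variable {α γ : Type*}

def IsS346Design (B : Finset (Finset α)) : Prop :=
  (∀ b ∈ B, b.card = 4 ∨ b.card = 6) ∧ ∀ s : Finset α, s.card = 3 → ∃! b, b ∈ B ∧ s ⊆ b

namespace IsS346Design

variable {B : Finset (Finset α)}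

theorem eq_of_triple_subset (hB : IsS346Design B) {s b b' : Finset α} (hs : s.card = 3)
    (hb : b ∈ B) (hb' : b' ∈ B) (hsb : s ⊆ b) (hsb' : s ⊆ b') : b = b' :=
  (hB.2 s hs).unique ⟨hb, hsb⟩ ⟨hb', hsb'⟩

theorem eq_of_subset (hB : IsS346Design B) {b b' : Finset α} (hb : b ∈ B) (hb' : b' ∈ B)
    (h : b ⊆ b') : b = b' := by
  obtain ⟨s, hsb, hs⟩ :=
    exists_subset_card_eq (show 3 ≤ b.card by rcases hB.1 b hb with h | h <;> omega)
  exact hB.eq_of_triple_subset hs hb hb' hsb (hsb.trans h)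

theorem map_equiv (hB : IsS346Design B) (e : α ≃ γ) :
    IsS346Design (B.map e.finsetCongr.toEmbedding) := by
  have subset_iff {s : Finset γ} {b : Finset α} :
      s ⊆ e.finsetCongr b ↔ e.symm.finsetCongr s ⊆ b := by
    simp only [Equiv.finsetCongr_apply, ← map_subset_map (f := e.symm.toEmbedding), map_map]
    simp
  refine ⟨fun b' hb' => ?_, fun s hs => ?_⟩
  · obtain ⟨b, hb, rfl⟩ := mem_map.1 hb'
    simpa using hB.1 b hb
  · obtain ⟨b, ⟨hb, hsb⟩, hbu⟩ := hB.2 (e.symm.finsetCongr s) (by simpa using hs)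
    refine ⟨e.finsetCongr b, ⟨mem_map_of_mem _ hb, subset_iff.2 hsb⟩, ?_⟩
    rintro b'' ⟨hb'', hsb'⟩
    obtain ⟨b', hb', rfl⟩ := mem_map.1 hb''
    rw [hbu b' ⟨hb', subset_iff.1 hsb'⟩]
    rfl

end IsS346Design

def relabelDesign (e : α ≃ γ) :
    {B : Finset (Finset α) // IsS346Design B} → {B : Finset (Finset γ) // IsS346Design B} :=
  Subtype.map (map e.finsetCongr.toEmbedding) fun _ hB => hB.map_equiv e

theorem relabelDesign_injective (e : α ≃ γ) : Injective (relabelDesign e) :=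
  Subtype.map_injective _ (map_injective _)

end Design

section Doubling

variable {β : Type*}

noncomputable def pointEmb (c : Finset β) : Fin c.card × Fin 2 ↪ β × Fin 2 :=
  (c.equivFin.symm.toEmbedding.trans (Embedding.subtype (· ∈ c))).prodMap (Embedding.refl _)

theorem pointEmb_fst_mem (c : Finset β) (p : Fin c.card × Fin 2) : (pointEmb c p).1 ∈ c :=
  (c.equivFin.symm p.1).2

theorem exists_pointEmb_eq {c : Finset β} {p : β × Fin 2} (hp : p.1 ∈ c) :
    ∃ q, pointEmb c q = p :=
  ⟨(c.equivFin ⟨p.1, hp⟩, p.2), by simp [pointEmb]⟩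

theorem exists_map_pointEmb {c : Finset β} {s : Finset (β × Fin 2)} (hs : ∀ p ∈ s, p.1 ∈ c) :
    ∃ t : Finset (Fin c.card × Fin 2), t.map (pointEmb c) = s := by
  obtain ⟨t, -, ht⟩ := subset_map_iff.1 fun p hp =>
    mem_map.2 <| (exists_pointEmb_eq (hs p hp)).imp fun q hq => ⟨mem_univ q, hq⟩
  exact ⟨t, ht.symm⟩

theorem map_pointEmb_univ_product_zero (c : Finset β) :
    (univ ×ˢ {0}).map (pointEmb c) = c ×ˢ {0} := by
  ext p
  simp only [mem_map, mem_product, mem_univ, mem_singleton, true_and]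
  constructor
  · rintro ⟨q, hq, rfl⟩
    exact ⟨pointEmb_fst_mem c q, hq⟩
  · rintro ⟨hp, hp0⟩
    obtain ⟨q, rfl⟩ := exists_pointEmb_eq hp
    exact ⟨q, hp0, rfl⟩

theorem snd_ne_one_of_mem_product_zero {c : Finset β} {p : β × Fin 2}
    (hp : p ∈ c ×ˢ {(0 : Fin 2)}) : p.2 ≠ 1 := by
  rw [(mem_singleton.1 (mem_product.1 hp).2)]
  decide

theorem map_some_subset_iff {u : Finset β} {b : Finset (Option β)} :
    u.map Embedding.some ⊆ b ↔ u ⊆ b.eraseNone := by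
  simp [subset_iff]

variable {B : Finset (Finset (Option β))} {b : Finset (Option β)}

namespace IsS346Design

theorem card_eraseNone_of_none_mem (hB : IsS346Design B) (hb : b ∈ B) (h : none ∈ b) :
    b.eraseNone.card ∈ ({3, 5} : Finset ℕ) := by
  rw [card_eraseNone_of_mem h]
  rcases hB.1 b hb with h | h <;> simp [h]

theorem card_eraseNone_of_none_notMem (hB : IsS346Design B) (hb : b ∈ B) (h : none ∉ b) :
    b.eraseNone.card ∈ ({4, 6} : Finset ℕ) := by
  rw [card_eraseNone_of_not_mem h]
  rcases hB.1 b hb with h | h <;> simp [h]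

theorem card_eraseNone_mem (hB : IsS346Design B) (hb : b ∈ B) :
    b.eraseNone.card ∈ ({3, 4, 5, 6} : Finset ℕ) := by
  by_cases h : none ∈ b
  · have := hB.card_eraseNone_of_none_mem hb h
    simp only [mem_insert, mem_singleton] at this ⊢
    omega
  · have := hB.card_eraseNone_of_none_notMem hb h
    simp only [mem_insert, mem_singleton] at this ⊢
    omega

theorem exists_snd_eq_one_of_none_mem (hB : IsS346Design B) (hb : b ∈ B) (hnone : none ∈ b)
    {F : Finset (Fin b.eraseNone.card × Fin 2)} (hF : F ∈ gadget b.eraseNone.card) :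
    ∃ p ∈ F.map (pointEmb b.eraseNone), p.2 = 1 := by
  obtain ⟨q, hq, hq1⟩ := exists_snd_eq_one_of_mem_gadget (hB.card_eraseNone_of_none_mem hb hnone) hF
  exact ⟨_, mem_map_of_mem _ hq, hq1⟩

end IsS346Design

variable [DecidableEq β]

theorem card_image_fst_map_pointEmb (c : Finset β) (t : Finset (Fin c.card × Fin 2)) :
    ((t.map (pointEmb c)).image Prod.fst).card = (t.image Prod.fst).card := by
  rw [map_eq_image, image_image, show Prod.fst ∘ pointEmb c =
      ((↑) ∘ c.equivFin.symm) ∘ Prod.fst from rfl, ← image_image,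
    card_image_of_injective _ (Subtype.val_injective.comp c.equivFin.symm.injective)]

noncomputable def doubling (B : Finset (Finset (Option β))) : Finset (Finset (β × Fin 2)) :=
  B.biUnion fun b => (gadget b.eraseNone.card).map (mapEmbedding (pointEmb b.eraseNone)).toEmbedding

theorem mem_doubling {B : Finset (Finset (Option β))} {E : Finset (β × Fin 2)} :
    E ∈ doubling B ↔
      ∃ b ∈ B, ∃ F ∈ gadget b.eraseNone.card, F.map (pointEmb b.eraseNone) = E := by
  simp [doubling]

/-- The old triple whose block has to cover the new triple `s`: the projection of `s`, completed
by `none` when two points of `s` lie over the same point. -/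
def baseTriple (s : Finset (β × Fin 2)) : Finset (Option β) :=
  if (s.image Prod.fst).card = 3 then (s.image Prod.fst).map Embedding.some
  else insert none ((s.image Prod.fst).map Embedding.some)

theorem card_baseTriple {s : Finset (β × Fin 2)} (hs : s.card = 3) : (baseTriple s).card = 3 := by
  have hle : (s.image Prod.fst).card ≤ 3 := card_image_le.trans hs.le
  have hge : s.card ≤ (s.image Prod.fst).card * 2 := by
    simpa using card_le_card (show s ⊆ s.image Prod.fst ×ˢ (univ : Finset (Fin 2)) from
      fun p hp => mem_product.2 ⟨mem_image_of_mem _ hp, mem_univ _⟩)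
  unfold baseTriple
  split_ifs with h3
  · rwa [card_map]
  · rw [card_insert_of_notMem (by simp), card_map]
    omega

theorem baseTriple_subset_iff {s : Finset (β × Fin 2)} {b : Finset (Option β)} :
    baseTriple s ⊆ b ↔
      s.image Prod.fst ⊆ b.eraseNone ∧ ((s.image Prod.fst).card ≠ 3 → none ∈ b) := by
  unfold baseTriple
  split_ifs with h3 <;> simp [insert_subset_iff, map_some_subset_iff, h3, and_comm]

theorem baseTriple_subset_of_subset_map (hB : IsS346Design B) (hb : b ∈ B)
    {s : Finset (β × Fin 2)} (hs : s.card = 3) {F : Finset (Fin b.eraseNone.card × Fin 2)}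
    (hF : F ∈ gadget b.eraseNone.card) (hsF : s ⊆ F.map (pointEmb b.eraseNone)) :
    baseTriple s ⊆ b := by
  refine baseTriple_subset_iff.2 ⟨image_subset_iff.2 fun p hp => ?_, fun h3 => ?_⟩
  · obtain ⟨q, -, rfl⟩ := mem_map.1 (hsF hp)
    exact pointEmb_fst_mem _ q
  · by_contra hnone
    obtain ⟨t, htF, rfl⟩ := subset_map_iff.1 hsF
    apply h3
    rw [card_image_fst_map_pointEmb, card_image_of_injOn
      ((injOn_fst_of_mem_gadget (hB.card_eraseNone_of_none_notMem hb hnone) hF).mono htF),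
      ← hs, card_map]

theorem existsUnique_subset_map (hB : IsS346Design B) (hb : b ∈ B) {s : Finset (β × Fin 2)}
    (hs : s.card = 3) (hsb : baseTriple s ⊆ b) :
    ∃! F, F ∈ gadget b.eraseNone.card ∧ s ⊆ F.map (pointEmb b.eraseNone) := by
  obtain ⟨hbase, hnone⟩ := baseTriple_subset_iff.1 hsb
  obtain ⟨t, rfl⟩ := exists_map_pointEmb (image_subset_iff.1 hbase)
  simp only [map_subset_map]
  refine existsUnique_gadget (hB.card_eraseNone_mem hb) (by simpa using hs) ?_
  by_cases h : none ∈ b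
  · exact Or.inl (hB.card_eraseNone_of_none_mem hb h)
  · rw [← card_image_fst_map_pointEmb]
    exact Or.inr (by_contra fun h3 => h (hnone h3))

theorem IsS346Design.doubling (hB : IsS346Design B) : IsS346Design (doubling B) := by
  refine ⟨fun E hE => ?_, fun s hs => ?_⟩
  · obtain ⟨b, hb, F, hF, rfl⟩ := mem_doubling.1 hE
    rw [card_map]
    exact card_of_mem_gadget (hB.card_eraseNone_mem hb) hF
  · obtain ⟨b, ⟨hb, hsb⟩, hbu⟩ := hB.2 _ (card_baseTriple hs)
    obtain ⟨F, ⟨hF, hsF⟩, hFu⟩ := existsUnique_subset_map hB hb hs hsb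
    refine ⟨F.map (pointEmb _), ⟨mem_doubling.2 ⟨b, hb, F, hF, rfl⟩, hsF⟩, ?_⟩
    rintro E ⟨hE, hsE⟩
    obtain ⟨b', hb', F', hF', rfl⟩ := mem_doubling.1 hE
    obtain rfl := hbu b' ⟨hb', baseTriple_subset_of_subset_map hB hb' hs hF' hsE⟩
    rw [hFu F' ⟨hF', hsE⟩]

theorem product_zero_mem_doubling (hB : IsS346Design B) (hb : b ∈ B) (hnone : none ∉ b) :
    b.eraseNone ×ˢ {0} ∈ doubling B :=
  mem_doubling.2 ⟨b, hb, _,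
    univ_product_zero_mem_gadget (hB.card_eraseNone_of_none_notMem hb hnone),
    map_pointEmb_univ_product_zero _⟩

theorem exists_mem_doubling_snd_eq_one_iff (hB : IsS346Design B) {x y z : β} (hxy : x ≠ y)
    (hxz : x ≠ z) (hyz : y ≠ z) :
    (∃ E ∈ doubling B, {(x, 0), (y, 0), (z, 0)} ⊆ E ∧ ∃ p ∈ E, p.2 = 1) ↔
      ∃ b ∈ B, {none, some x, some y, some z} ⊆ b := by
  set s : Finset (β × Fin 2) := {(x, 0), (y, 0), (z, 0)}
  have hs : s.card = 3 := card_eq_three.2 ⟨_, _, _, by simpa, by simpa, by simpa, rfl⟩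
  have hbase : baseTriple s = {some x, some y, some z} := by
    have hxyz : s.image Prod.fst = {x, y, z} := by simp [s]
    have h3 : ({x, y, z} : Finset β).card = 3 := card_eq_three.2 ⟨_, _, _, hxy, hxz, hyz, rfl⟩
    simp [baseTriple, hxyz, h3]
  have hD := hB.doubling
  constructor
  · rintro ⟨E, hE, hsE, p, hpE, hp1⟩
    obtain ⟨b, hb, F, hF, rfl⟩ := mem_doubling.1 hE
    have hsb := baseTriple_subset_of_subset_map hB hb hs hF hsE
    refine ⟨b, hb, insert_subset ?_ (hbase ▸ hsb)⟩
    by_contra hnone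
    have hs0 : s ⊆ b.eraseNone ×ˢ {0} := fun q hq => mem_product.2
      ⟨(baseTriple_subset_iff.1 hsb).1 (mem_image_of_mem _ hq), by
        simp only [s, mem_insert, mem_singleton] at hq
        rcases hq with rfl | rfl | rfl <;> exact mem_singleton_self _⟩
    rw [hD.eq_of_triple_subset hs hE (product_zero_mem_doubling hB hb hnone) hsE hs0] at hpE
    exact snd_ne_one_of_mem_product_zero hpE hp1
  · rintro ⟨b, hb, hxyzb⟩
    obtain ⟨E, ⟨hE, hsE⟩, -⟩ := hD.2 s hs
    refine ⟨E, hE, hsE, ?_⟩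
    obtain ⟨b', hb', F, hF, rfl⟩ := mem_doubling.1 hE
    obtain rfl := hB.eq_of_triple_subset (card_baseTriple hs) hb' hb
      (baseTriple_subset_of_subset_map hB hb' hs hF hsE) (hbase ▸ (subset_insert _ _).trans hxyzb)
    exact hB.exists_snd_eq_one_of_none_mem hb' (hxyzb (mem_insert_self _ _)) hF

theorem some_mem_iff_exists_mem_doubling (hB : IsS346Design B) (hb : b ∈ B) {x y z : β}
    (hxyb : {none, some x, some y} ⊆ b) (hxy : x ≠ y) (hxz : x ≠ z) (hyz : y ≠ z) :
    some z ∈ b ↔ ∃ E ∈ doubling B, {(x, 0), (y, 0), (z, 0)} ⊆ E ∧ ∃ p ∈ E, p.2 = 1 := by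
  have h3 : ({none, some x, some y} : Finset (Option β)).card = 3 :=
    card_eq_three.2 ⟨_, _, _, by simp, by simp, by simpa, rfl⟩
  rw [exists_mem_doubling_snd_eq_one_iff hB hxy hxz hyz]
  constructor
  · intro hz
    exact ⟨b, hb, by simpa [insert_subset_iff, hz] using hxyb⟩
  · rintro ⟨b', hb', hb'xyz⟩
    obtain rfl := hB.eq_of_triple_subset h3 hb' hb
      (Subset.trans (by simp [insert_subset_iff]) hb'xyz) hxyb
    exact hb'xyz (by simp)

variable {B' : Finset (Finset (Option β))}

theorem mem_of_doubling_eq_of_none_mem (hB : IsS346Design B) (hB' : IsS346Design B')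
    (h : doubling B = doubling B') (hb : b ∈ B) (hnone : none ∈ b) : b ∈ B' := by
  obtain ⟨x, hx, y, hy, hxy⟩ := one_lt_card.1 (show 1 < b.eraseNone.card by
    have := hB.card_eraseNone_of_none_mem hb hnone
    simp only [mem_insert, mem_singleton] at this
    omega)
  rw [mem_eraseNone] at hx hy
  have hT : ({none, some x, some y} : Finset (Option β)).card = 3 :=
    card_eq_three.2 ⟨_, _, _, by simp, by simp, by simpa, rfl⟩
  obtain ⟨b', ⟨hb', hTb'⟩, -⟩ := hB'.2 _ hT
  have hTb : {none, some x, some y} ⊆ b := by simp [insert_subset_iff, hnone, hx, hy]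
  suffices b = b' from this ▸ hb'
  ext (_ | z)
  · exact iff_of_true (hTb (by simp)) (hTb' (by simp))
  · by_cases hz : z = x ∨ z = y
    · exact iff_of_true (hTb (by rcases hz with rfl | rfl <;> simp))
        (hTb' (by rcases hz with rfl | rfl <;> simp))
    · push Not at hz
      rw [some_mem_iff_exists_mem_doubling hB hb hTb hxy (Ne.symm hz.1) (Ne.symm hz.2), h,
        some_mem_iff_exists_mem_doubling hB' hb' hTb' hxy (Ne.symm hz.1) (Ne.symm hz.2)]

theorem mem_of_doubling_eq_of_none_notMem (hB : IsS346Design B) (hB' : IsS346Design B')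
    (h : doubling B = doubling B') (hb : b ∈ B) (hnone : none ∉ b) : b ∈ B' := by
  have h0 := h ▸ product_zero_mem_doubling hB hb hnone
  obtain ⟨b', hb', F, hF, hFE⟩ := mem_doubling.1 h0
  have hnone' : none ∉ b' := fun hn' => by
    obtain ⟨p, hp, hp1⟩ := hB'.exists_snd_eq_one_of_none_mem hb' hn' hF
    exact snd_ne_one_of_mem_product_zero (hFE ▸ hp) hp1
  have hsub : b.eraseNone ×ˢ {(0 : Fin 2)} ⊆ b'.eraseNone ×ˢ {0} := by
    intro p hp
    refine mem_product.2 ⟨?_, (mem_product.1 hp).2⟩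
    rw [← hFE] at hp
    obtain ⟨q, -, rfl⟩ := mem_map.1 hp
    exact pointEmb_fst_mem _ q
  have heq := congrArg (image Prod.fst)
    (hB'.doubling.eq_of_subset h0 (product_zero_mem_doubling hB' hb' hnone') hsub)
  rw [product_image_fst (singleton_nonempty _), product_image_fst (singleton_nonempty _)] at heq
  suffices b = b' from this ▸ hb'
  ext (_ | z)
  · simp [hnone, hnone']
  · rw [← mem_eraseNone, heq, mem_eraseNone]

theorem subset_of_doubling_eq (hB : IsS346Design B) (hB' : IsS346Design B')
    (h : doubling B = doubling B') : B ⊆ B' := fun b hb => by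
  by_cases hnone : none ∈ b
  · exact mem_of_doubling_eq_of_none_mem hB hB' h hb hnone
  · exact mem_of_doubling_eq_of_none_notMem hB hB' h hb hnone

noncomputable def doublingDesign :
    {B : Finset (Finset (Option β)) // IsS346Design B} →
      {D : Finset (Finset (β × Fin 2)) // IsS346Design D} :=
  fun B => ⟨doubling B.1, B.2.doubling⟩

theorem doublingDesign_injective : Injective (doublingDesign (β := β)) := by
  rintro ⟨B, hB⟩ ⟨B', hB'⟩ h
  have h : doubling B = doubling B' := congrArg Subtype.val h
  exact Subtype.ext (Subset.antisymm (subset_of_doubling_eq hB hB' h)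
    (subset_of_doubling_eq hB' hB h.symm))

end Doubling

/-- There is an injection from the set of `S(3,{4,6},n)` designs on `Fin n` into
the set of `S(3,{4,6},2n-2)` designs on `Fin (2n-2)`. -/
theorem s346_injection (n : ℕ) (hn : 1 ≤ n) :
    ∃ φ : {B : Finset (Finset (Fin n)) // IsS346 n B} →
          {B : Finset (Finset (Fin (2 * n - 2))) // IsS346 (2 * n - 2) B},
      Function.Injective φ := by
  obtain ⟨m, rfl⟩ : ∃ m, n = m + 1 := ⟨n - 1, by omega⟩
  let e₁ : Fin (m + 1) ≃ Option (Fin m) := finSuccEquivLast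
  let e₂ : Fin m × Fin 2 ≃ Fin (2 * (m + 1) - 2) := finProdFinEquiv.trans (finCongr (by omega))
  exact ⟨relabelDesign e₂ ∘ doublingDesign ∘ relabelDesign e₁,
    (relabelDesign_injective e₂).comp (doublingDesign_injective.comp (relabelDesign_injective e₁))⟩
end
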